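/- Let χ ∈ ℚ, μ > 0 rational, and let v = (r, dH + kf + D, a) and v₁ = (r₁, d₁H + k₁f + D₁, a₁) with D, D₁ ∈ N. Assume: 0 < r₁ < r; r·d₁ = r₁·d; (D₁, D₁) ≤ 0; ⟨v₁, v₁⟩ ≥ −r₁²χ; μ(r₁k − rk₁) ≥ 1; and −(D,D) + ⟨v,v⟩ + r²χ > 0. Then d/r − μ(−(D,D) + ⟨v,v⟩ + r²χ)/2 < (r₁a − ra₁)/(r₁k − rk₁). (This is the positive-rank case of the paper's Lemma locating the Gieseker chamber; in the paper μ is a positive integer with μH ∈ NS(X), so that μ(r₁k − rk₁) is a positive integer.) -/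

import Mathlib

/-!
Since `H, f` span a hyperbolic plane orthogonal to `D`, `(ξ·ξ) = 2dk + (D·D)`, so the positive
quantity in the statement is `Q = 2dk − 2ra + r²χ`. Using `rd₁ = r₁d` to eliminate `d₁`, the
Bogomolov-type bound `2(d₁k₁ − r₁a₁) ≥ −r₁²χ` for `v₁` becomes
`(r₁a − ra₁)/κ ≥ d/r − r₁Q/(2rκ)` with `κ = r₁k − rk₁`, and `r₁/(rκ) < μ` because `μκ ≥ 1` and
`r₁ < r`.
-/

theorem LinearMap.apply_self_smul_add_smul_add {R M : Type*} [CommRing R] [AddCommGroup M]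
    [Module R M] (B : M →ₗ[R] M →ₗ[R] R) (hB : ∀ x y : M, B x y = B y x) {H f D : M}
    (hHH : B H H = 0) (hff : B f f = 0) (hHf : B H f = 1) (hDf : B D f = 0) (hDH : B D H = 0)
    (d k : R) :
    B (d • H + k • f + D) (d • H + k • f + D) = 2 * d * k + B D D := by
  have hfH : B f H = 1 := hB f H ▸ hHf
  have hHD : B H D = 0 := hB H D ▸ hDH
  have hfD : B f D = 0 := hB f D ▸ hDf
  simp only [map_add, map_smul, LinearMap.add_apply, LinearMap.smul_apply, smul_eq_mul,
    hHH, hff, hHf, hfH, hDf, hDH, hHD, hfD]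
  ring

section
variable {K : Type*} [Field K] [LinearOrder K] [IsStrictOrderedRing K]

theorem bogomolov_slope_bound {χ r d k a r₁ d₁ k₁ a₁ : K} (hr₁ : 0 < r₁)
    (hprop : r * d₁ = r₁ * d) (hBog₁ : -(r₁ ^ 2 * χ) ≤ 2 * d₁ * k₁ - 2 * r₁ * a₁) :
    2 * d * (r₁ * k - r * k₁) - 2 * r * (r₁ * a - r * a₁)
      ≤ r₁ * (2 * d * k - 2 * r * a + r ^ 2 * χ) := by
  refine le_of_mul_le_mul_left ?_ hr₁
  linear_combination mul_le_mul_of_nonneg_left hBog₁ (sq_nonneg r) + (2 * r * k₁) * hprop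

theorem div_sub_mul_div_two_lt_div {μ Q r d κ s r₁ : K} (hμ : 0 < μ)
    (hr₁ : 0 < r₁) (hr₁r : r₁ < r) (hμκ : 1 ≤ μ * κ) (hQ : 0 < Q)
    (hbound : 2 * d * κ - 2 * r * s ≤ r₁ * Q) :
    d / r - μ * Q / 2 < s / κ := by
  have hr : 0 < r := hr₁.trans hr₁r
  have hκ : 0 < κ := pos_of_mul_pos_right (one_pos.trans_le hμκ) hμ.le
  rw [div_sub_div _ _ hr.ne' two_ne_zero, div_lt_div_iff₀ (by positivity) hκ]
  nlinarith [mul_le_mul_of_nonneg_left hμκ (mul_pos hr hQ).le]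

end

theorem stmt4_general {V : Type*} [AddCommGroup V] [Module ℚ V]
    (B : V →ₗ[ℚ] V →ₗ[ℚ] ℚ) (hB : ∀ x y : V, B x y = B y x)
    (H f : V) (hHH : B H H = 0) (hff : B f f = 0) (hHf : B H f = 1)
    (χ μ r d k a r₁ d₁ k₁ a₁ : ℚ) (D D₁ : V)
    (hDf : B D f = 0) (hDH : B D H = 0)
    (hD₁f : B D₁ f = 0) (hD₁H : B D₁ H = 0)
    (hμ : 0 < μ) (hr₁pos : 0 < r₁) (hr₁r : r₁ < r)
    (hprop : r * d₁ = r₁ * d)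
    (hD₁neg : B D₁ D₁ ≤ 0)
    (hBog₁ : B (d₁ • H + k₁ • f + D₁) (d₁ • H + k₁ • f + D₁) - 2 * r₁ * a₁ ≥ -(r₁ ^ 2 * χ))
    (hμk : μ * (r₁ * k - r * k₁) ≥ 1)
    (hpos : -(B D D) + (B (d • H + k • f + D) (d • H + k • f + D) - 2 * r * a) + r ^ 2 * χ > 0) :
    d / r - μ * (-(B D D) + (B (d • H + k • f + D) (d • H + k • f + D) - 2 * r * a)
        + r ^ 2 * χ) / 2
      < (r₁ * a - r * a₁) / (r₁ * k - r * k₁) := by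
  rw [B.apply_self_smul_add_smul_add hB hHH hff hHf hD₁f hD₁H] at hBog₁
  have hQ : -(B D D) + (B (d • H + k • f + D) (d • H + k • f + D) - 2 * r * a) + r ^ 2 * χ
      = 2 * d * k - 2 * r * a + r ^ 2 * χ := by
    rw [B.apply_self_smul_add_smul_add hB hHH hff hHf hDf hDH]
    ring
  rw [hQ] at hpos ⊢
  refine div_sub_mul_div_two_lt_div hμ hr₁pos hr₁r hμk hpos ?_
  exact bogomolov_slope_bound hr₁pos hprop (by linarith)

/-- Positive-rank case of the paper's Lemma locating the Gieseker chamber: with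
`v = (r, dH + kf + D, a)`, `v₁ = (r₁, d₁H + k₁f + D₁, a₁)`, `D, D₁ ∈ N`,
`0 < r₁ < r`, `rd₁ = r₁d`, `(D₁,D₁) ≤ 0`, `⟨v₁,v₁⟩ ≥ −r₁²χ`,
`μ(r₁k − rk₁) ≥ 1` and `−(D,D) + ⟨v,v⟩ + r²χ > 0`, one has
`d/r − μ(−(D,D) + ⟨v,v⟩ + r²χ)/2 < (r₁a − ra₁)/(r₁k − rk₁)`. -/
theorem stmt4 {V : Type*} [AddCommGroup V] [Module ℚ V] [FiniteDimensional ℚ V]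
    (B : V →ₗ[ℚ] V →ₗ[ℚ] ℚ) (hB : ∀ x y : V, B x y = B y x)
    (H f : V) (hHH : B H H = 0) (hff : B f f = 0) (hHf : B H f = 1)
    (χ μ r d k a r₁ d₁ k₁ a₁ : ℚ) (D D₁ : V)
    (hDf : B D f = 0) (hDH : B D H = 0)
    (hD₁f : B D₁ f = 0) (hD₁H : B D₁ H = 0)
    (hμ : 0 < μ) (hr₁pos : 0 < r₁) (hr₁r : r₁ < r)
    (hprop : r * d₁ = r₁ * d)
    (hD₁neg : B D₁ D₁ ≤ 0)
    (hBog₁ : B (d₁ • H + k₁ • f + D₁) (d₁ • H + k₁ • f + D₁) - 2 * r₁ * a₁ ≥ -(r₁ ^ 2 * χ))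
    (hμk : μ * (r₁ * k - r * k₁) ≥ 1)
    (hpos : -(B D D) + (B (d • H + k • f + D) (d • H + k • f + D) - 2 * r * a) + r ^ 2 * χ > 0) :
    d / r - μ * (-(B D D) + (B (d • H + k • f + D) (d • H + k • f + D) - 2 * r * a)
        + r ^ 2 * χ) / 2
      < (r₁ * a - r * a₁) / (r₁ * k - r * k₁) :=
  stmt4_general B hB H f hHH hff hHf χ μ r d k a r₁ d₁ k₁ a₁ D D₁ hDf hDH hD₁f hD₁H hμ hr₁pos hr₁r
    hprop hD₁neg hBog₁ hμk hpos
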